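/- Let M be a feasible envy-free matching in an HRLQ instance G. Define the HR instance G' on the unmatched residents and under-subscribed hospitals, where (r,h) ∈ E' iff h prefers r to its threshold resident, with capacities q⁺(h) − |M(h)|. If M_s is a stable matching in G', then M ∪ M_s is a maximum-size envy-free matching among all envy-free matchings of G containing M. -/

import Mathlib

/-!
Envy-freeness of `M ∪ Mₛ` comes from the threshold condition defining `G'` (for envy towards
residents matched in `M`) and from the stability of `Mₛ` (for envy towards residents new to it).

For maximality, let `M'` be an envy-free matching containing `M` and let `S` be the residents
unmatched in `M` who prefer their `M'`-hospital to their `Mₛ`-partner. If `M'` sends `r ∈ S` to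
`h`, then envy-freeness of `M'` makes `(r, h)` an edge of `G'`, so by stability `h` is full in
`M ∪ Mₛ` and prefers each of its `Mₛ`-residents to `r`. Envy-freeness of `M'` then forces every
such resident not sent to `h` by `M'` into `S`, and the capacity of `h` in `M'` shows that `h`
receives at most as many residents of `S` from `M'` as from `Mₛ`. Summing over hospitals, all of
`S` is matched in `Mₛ`, so every resident matched in `M'` is matched in `M ∪ Mₛ`.
-/

/-- An HRLQ instance: bipartite graph on residents `R` and hospitals `H` with
strict preferences encoded as rank functions (lower rank = more preferred)
and lower/upper quotas per hospital. -/
structure HRLQ (R H : Type) where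
  E : R → H → Prop
  rPref : R → H → ℕ
  hPref : H → R → ℕ
  lq : H → ℕ
  uq : H → ℕ

namespace HRLQ

variable {R H : Type}

/-- residents matched to hospital `h` -/
def matchedTo (M : R → Option H) (h : H) : Set R := {r | M r = some h}

/-- size of a matching -/
noncomputable def msize (M : R → Option H) : ℕ := {r | M r ≠ none}.ncard

variable (I : HRLQ R H)

/-- resident `r` strictly prefers hospital `h` to assignment `o`
    (being unmatched is least preferred); `h` must be acceptable to `r`. -/
def PrefersH (r : R) (h : H) (o : Option H) : Prop :=
  I.E r h ∧ ∀ h', o = some h' → I.rPref r h < I.rPref r h'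

def IsMatching (M : R → Option H) : Prop :=
  (∀ r h, M r = some h → I.E r h) ∧ ∀ h, (matchedTo M h).ncard ≤ I.uq h

def Feasible (M : R → Option H) : Prop :=
  ∀ h, I.lq h ≤ (matchedTo M h).ncard

def Blocks (M : R → Option H) (r : R) (h : H) : Prop :=
  I.E r h ∧ M r ≠ some h ∧ I.PrefersH r h (M r) ∧
    ((matchedTo M h).ncard < I.uq h ∨ ∃ r' ∈ matchedTo M h, I.hPref h r < I.hPref h r')

def Stable (M : R → Option H) : Prop := ∀ r h, ¬ I.Blocks M r h

def Envies (M : R → Option H) (r r' : R) : Prop :=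
  ∃ h, M r' = some h ∧ I.PrefersH r h (M r) ∧ I.hPref h r < I.hPref h r'

def EnvyFree (M : R → Option H) : Prop := ∀ r r', ¬ I.Envies M r r'

def RelaxedStable (M : R → Option H) : Prop :=
  (∀ h, {r | r ∈ matchedTo M h ∧ ∃ h', I.Blocks M r h'}.ncard ≤ I.lq h) ∧
  ∀ r, M r = none → ∀ h, ¬ I.Blocks M r h

/-- preferences are strict -/
def StrictPrefs : Prop :=
  (∀ r, Function.Injective (I.rPref r)) ∧ ∀ h, Function.Injective (I.hPref h)

end HRLQ

open Finset in
theorem Set.forall_ne_none_of_ncard_fiber_le {α β : Type*} [Finite α] {S : Set α}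
    {f g : α → Option β} (hf : ∀ a ∈ S, f a ≠ none)
    (hfg : ∀ b, {a ∈ S | f a = some b}.ncard ≤ {a ∈ S | g a = some b}.ncard) :
    ∀ a ∈ S, g a ≠ none := by
  classical
  have := Fintype.ofFinite α
  set T := (S.toFinset.image f ∪ S.toFinset.image g).erase none
  have hfT : #{a ∈ S.toFinset | f a ∈ T} = #S.toFinset := by
    refine congrArg card (filter_true_of_mem fun a ha => mem_erase.2 ⟨?_, ?_⟩)
    · exact hf a (Set.mem_toFinset.1 ha)
    · exact Finset.mem_union_left _ (Finset.mem_image_of_mem f ha)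
  have hle : #{a ∈ S.toFinset | f a ∈ T} ≤ #{a ∈ S.toFinset | g a ∈ T} := by
    rw [← sum_card_fiberwise_eq_card_filter, ← sum_card_fiberwise_eq_card_filter]
    refine sum_le_sum fun o ho => ?_
    obtain ⟨b, rfl⟩ := Option.ne_none_iff_exists'.1 (ne_of_mem_erase ho)
    simpa only [← Set.ncard_coe_finset, coe_filter, Set.mem_toFinset] using hfg b
  have hgT : #{a ∈ S.toFinset | g a ∈ T} = #S.toFinset :=
    le_antisymm (card_filter_le _ _) (hfT ▸ hle)
  exact fun a ha => ne_of_mem_erase (filter_card_eq hgT a (Set.mem_toFinset.2 ha))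

namespace HRLQ

open Function

variable {R H : Type} (I : HRLQ R H)

/-- The edges of `G'`: the last conjunct says that `h` prefers `r` to its threshold resident. -/
def ReducedEdge (M : R → Option H) (r : R) (h : H) : Prop :=
  M r = none ∧ (matchedTo M h).ncard < I.uq h ∧ I.E r h ∧
    ∀ r', M r' ≠ none → I.PrefersH r' h (M r') → I.hPref h r < I.hPref h r'

/-- Stability of `Mₛ` in `G'`, whose capacities `uq h - |M(h)|` are written additively. -/
def ReducedStable (M Ms : R → Option H) : Prop :=
  ∀ r h, I.ReducedEdge M r h → Ms r ≠ some h →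
    (∀ h', Ms r = some h' → I.rPref r h < I.rPref r h') →
    ¬ ((matchedTo Ms h).ncard + (matchedTo M h).ncard < I.uq h ∨
       ∃ r', Ms r' = some h ∧ I.hPref h r < I.hPref h r')

structure IsEnvyFreeExtension (M M' : R → Option H) : Prop where
  isMatching : I.IsMatching M'
  envyFree : I.EnvyFree M'
  le : ∀ r h, M r = some h → M' r = some h

def improvedBy (M Ms M' : R → Option H) : Set R :=
  {r | M r = none ∧ ∃ h, M' r = some h ∧ I.PrefersH r h (Ms r)}

variable {I} {M Ms M' : R → Option H} {r r' : R} {h : H}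

lemma PrefersH.ne_some {o : Option H} (hp : I.PrefersH r h o) : o ≠ some h :=
  fun ho => lt_irrefl _ (hp.2 h ho)

lemma PrefersH.of_or {o o' : Option H} (hp : I.PrefersH r h (o.or o')) : I.PrefersH r h o :=
  ⟨hp.1, fun h' ho => hp.2 h' (by simp [ho])⟩

lemma isMatching_or [Finite R] (hM : ∀ r h, M r = some h → I.E r h)
    (hMs : ∀ r h, Ms r = some h → I.E r h)
    (hcap : ∀ h, (matchedTo Ms h).ncard + (matchedTo M h).ncard ≤ I.uq h) :
    I.IsMatching fun r => (M r).or (Ms r) := by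
  refine ⟨fun r h hr => ?_, fun h => ?_⟩
  · rcases Option.or_eq_some_iff.1 hr with hr | ⟨-, hr⟩
    exacts [hM r h hr, hMs r h hr]
  · have hsub : matchedTo (fun r => (M r).or (Ms r)) h ⊆ matchedTo Ms h ∪ matchedTo M h :=
      fun r hr => (Option.or_eq_some_iff.1 hr).elim Or.inr fun hr => Or.inl hr.2
    exact (Set.ncard_le_ncard hsub).trans ((Set.ncard_union_le _ _).trans (hcap h))

lemma envyFree_or (hM : I.EnvyFree M) (hMs : ∀ r h, Ms r = some h → I.ReducedEdge M r h)
    (hstable : I.ReducedStable M Ms) : I.EnvyFree fun r => (M r).or (Ms r) := by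
  rintro r r' ⟨h, hr', hpref, hrank⟩
  rcases Option.or_eq_some_iff.1 hr' with hMr' | ⟨-, hMsr'⟩
  · exact hM r r' ⟨h, hMr', hpref.of_or, hrank⟩
  obtain ⟨-, hunder, -, hthreshold⟩ := hMs r' h hMsr'
  cases hMr : M r with
  | some h₀ => exact lt_asymm hrank (hthreshold r (by simp [hMr]) (hMr ▸ hpref.of_or))
  | none =>
    simp only [hMr, Option.none_or] at hpref
    have hedge : I.ReducedEdge M r h :=
      ⟨hMr, hunder, hpref.1, fun r'' hr'' hp'' => hrank.trans (hthreshold r'' hr'' hp'')⟩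
    exact hstable r h hedge hpref.ne_some hpref.2 (Or.inr ⟨r', hMsr', hrank⟩)

lemma IsEnvyFreeExtension.reducedEdge [Finite R] (hhinj : ∀ h, Injective (I.hPref h))
    (hM' : I.IsEnvyFreeExtension M M') (hr : M r = none) (hr' : M' r = some h) :
    I.ReducedEdge M r h := by
  refine ⟨hr, ?_, hM'.isMatching.1 r h hr', fun r'' hr'' hpref => ?_⟩
  · have hss : matchedTo M h ⊂ matchedTo M' h :=
      (Set.ssubset_iff_of_subset fun x hx => hM'.le x h hx).2
        ⟨r, hr', (by simp [matchedTo, hr] : r ∉ matchedTo M h)⟩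
    exact (Set.ncard_lt_ncard hss).trans_le (hM'.isMatching.2 h)
  obtain ⟨h'', hh''⟩ := Option.ne_none_iff_exists'.1 hr''
  have hne : r ≠ r'' := by rintro rfl; simp [hr] at hh''
  have hnot : ¬ I.hPref h r'' < I.hPref h r := fun hlt =>
    hM'.envyFree r'' r ⟨h, hr', (hM'.le r'' h'' hh'').trans hh''.symm ▸ hpref, hlt⟩
  exact (not_lt.1 hnot).lt_of_ne fun heq => hne (hhinj h heq)

lemma ReducedStable.full (hstable : I.ReducedStable M Ms) (hedge : I.ReducedEdge M r h)
    (hpref : I.PrefersH r h (Ms r)) :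
    I.uq h ≤ (matchedTo Ms h).ncard + (matchedTo M h).ncard :=
  not_lt.1 fun hlt => hstable r h hedge hpref.ne_some hpref.2 (Or.inl hlt)

lemma ReducedStable.hPref_lt (hhinj : ∀ h, Injective (I.hPref h))
    (hstable : I.ReducedStable M Ms) (hedge : I.ReducedEdge M r h) (hpref : I.PrefersH r h (Ms r))
    (hr' : Ms r' = some h) : I.hPref h r' < I.hPref h r := by
  have hle : I.hPref h r' ≤ I.hPref h r :=
    not_lt.1 fun hlt => hstable r h hedge hpref.ne_some hpref.2 (Or.inr ⟨r', hr', hlt⟩)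
  refine hle.lt_of_ne fun heq => hpref.ne_some ?_
  rwa [hhinj h heq] at hr'

lemma exists_prefersH_of_envyFree (hrinj : ∀ r, Injective (I.rPref r)) (hM' : I.IsMatching M')
    (hM'ef : I.EnvyFree M') (hr : M' r = some h) (hE : I.E r' h)
    (hlt : I.hPref h r' < I.hPref h r) (hne : M' r' ≠ some h) :
    ∃ h', M' r' = some h' ∧ I.PrefersH r' h' (some h) := by
  by_contra! hcon
  refine hM'ef r' r ⟨h, hr, ⟨hE, fun h'' hh'' => ?_⟩, hlt⟩
  have hle : I.rPref r' h ≤ I.rPref r' h'' :=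
    not_lt.1 fun hlt' => hcon h'' hh'' ⟨hM'.1 r' h'' hh'', fun _ e => by cases e; exact hlt'⟩
  exact hle.lt_of_ne fun heq => hne (by rwa [hrinj r' heq])

lemma prefersH_of_mem_improvedBy (hr : r ∈ I.improvedBy M Ms M') (hr' : M' r = some h) :
    I.PrefersH r h (Ms r) := by
  obtain ⟨-, h₀, hh₀, hpref⟩ := hr
  cases hh₀.symm.trans hr'
  exact hpref

lemma ncard_matchedTo_add_ncard_le [Finite R] (hsub : ∀ r h, M r = some h → M' r = some h)
    (h : H) :
    (matchedTo M h).ncard + {r | M r = none ∧ M' r = some h}.ncard ≤ (matchedTo M' h).ncard := by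
  rw [← Set.ncard_union_eq (Set.disjoint_left.2 fun r hM hnew => by simp_all [matchedTo])]
  exact Set.ncard_le_ncard (Set.union_subset (fun r hr => hsub r h hr) fun r hr => hr.2)

lemma mem_improvedBy_of_ms_eq [Finite R] (hstrict : I.StrictPrefs)
    (hMs : ∀ r h, Ms r = some h → I.ReducedEdge M r h) (hstable : I.ReducedStable M Ms)
    (hM' : I.IsEnvyFreeExtension M M') {r₀ : R} (hr₀ : r₀ ∈ I.improvedBy M Ms M')
    (hr₀h : M' r₀ = some h) (hr : Ms r = some h) (hne : M' r ≠ some h) :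
    r ∈ I.improvedBy M Ms M' := by
  have hedge := hM'.reducedEdge hstrict.2 hr₀.1 hr₀h
  have hlt := hstable.hPref_lt hstrict.2 hedge (prefersH_of_mem_improvedBy hr₀ hr₀h) hr
  obtain ⟨h', hh', hpref⟩ := exists_prefersH_of_envyFree hstrict.1 hM'.isMatching hM'.envyFree
    hr₀h (hMs r h hr).2.2.1 hlt hne
  exact ⟨(hMs r h hr).1, h', hh', hr ▸ hpref⟩

lemma ncard_improvedBy_fiber_le [Finite R] (hstrict : I.StrictPrefs)
    (hMs : ∀ r h, Ms r = some h → I.ReducedEdge M r h) (hstable : I.ReducedStable M Ms)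
    (hM' : I.IsEnvyFreeExtension M M') (h : H) :
    {r ∈ I.improvedBy M Ms M' | M' r = some h}.ncard ≤
      {r ∈ I.improvedBy M Ms M' | Ms r = some h}.ncard := by
  set S := I.improvedBy M Ms M'
  rcases Set.eq_empty_or_nonempty {r ∈ S | M' r = some h} with hempty | ⟨r₀, hr₀, hr₀h⟩
  · simp [hempty]
  have hfull := hstable.full (hM'.reducedEdge hstrict.2 hr₀.1 hr₀h)
    (prefersH_of_mem_improvedBy hr₀ hr₀h)
  set new := {r | M r = none ∧ M' r = some h}
  set both := {r | Ms r = some h ∧ M' r = some h}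
  have hnew : {r ∈ S | M' r = some h}.ncard + both.ncard ≤ new.ncard := by
    rw [← Set.ncard_union_eq (Set.disjoint_left.2 fun r hS hboth =>
      (prefersH_of_mem_improvedBy hS.1 hS.2).ne_some hboth.1)]
    exact Set.ncard_le_ncard (Set.union_subset (fun r hr => ⟨hr.1.1, hr.2⟩)
      fun r hr => ⟨(hMs r h hr.1).1, hr.2⟩)
  have hms : (matchedTo Ms h).ncard ≤ {r ∈ S | Ms r = some h}.ncard + both.ncard := by
    refine (Set.ncard_le_ncard fun r (hr : Ms r = some h) => ?_).trans (Set.ncard_union_le _ _)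
    by_cases hr' : M' r = some h
    · exact Or.inr ⟨hr, hr'⟩
    · exact Or.inl ⟨mem_improvedBy_of_ms_eq hstrict hMs hstable hM' hr₀ hr₀h hr hr', hr⟩
  have hnew_cap : (matchedTo M h).ncard + new.ncard ≤ (matchedTo M' h).ncard :=
    ncard_matchedTo_add_ncard_le hM'.le h
  have hcap := hM'.isMatching.2 h
  -- |S ∩ M'⁻¹ h| + |both| ≤ |new| ≤ uq h - |M(h)| ≤ |Mₛ(h)| ≤ |S ∩ Mₛ⁻¹ h| + |both|
  omega

lemma ms_ne_none_of_extension [Finite R] (hstrict : I.StrictPrefs)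
    (hMs : ∀ r h, Ms r = some h → I.ReducedEdge M r h) (hstable : I.ReducedStable M Ms)
    (hM' : I.IsEnvyFreeExtension M M') (hr : M r = none) (hr' : M' r ≠ none) : Ms r ≠ none := by
  intro hMs_none
  obtain ⟨h, hh⟩ := Option.ne_none_iff_exists'.1 hr'
  have hS : r ∈ I.improvedBy M Ms M' := ⟨hr, h, hh, hM'.isMatching.1 r h hh, by simp [hMs_none]⟩
  refine Set.forall_ne_none_of_ncard_fiber_le (fun s hs => ?_)
    (ncard_improvedBy_fiber_le hstrict hMs hstable hM') r hS hMs_none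
  obtain ⟨-, h', hs', -⟩ := hs
  simp [hs']

end HRLQ

theorem extension_by_stable_is_maximum_containing
    {R H : Type} [Fintype R] (I : HRLQ R H)
    (hstrict : I.StrictPrefs)
    (M : R → Option H) (hM : I.IsMatching M ∧ I.Feasible M ∧ I.EnvyFree M)
    -- the edge set of the reduced HR instance G'
    (E' : R → H → Prop)
    (hE' : ∀ r h, E' r h ↔
      (M r = none ∧ (HRLQ.matchedTo M h).ncard < I.uq h ∧ I.E r h ∧
        -- h prefers r to its threshold resident (dummy resident if none exists)
        ∀ r', M r' ≠ none → I.PrefersH r' h (M r') → I.hPref h r < I.hPref h r'))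
    (Ms : R → Option H)
    -- Mₛ is a matching of G' respecting its residual capacities
    (hMs₁ : ∀ r h, Ms r = some h → E' r h)
    (hMs₂ : ∀ h, (HRLQ.matchedTo Ms h).ncard + (HRLQ.matchedTo M h).ncard ≤ I.uq h)
    -- Mₛ is stable in G'
    (hMs₃ : ∀ r h, E' r h → Ms r ≠ some h →
      (∀ h', Ms r = some h' → I.rPref r h < I.rPref r h') →
      ¬ ((HRLQ.matchedTo Ms h).ncard + (HRLQ.matchedTo M h).ncard < I.uq h ∨
         ∃ r', Ms r' = some h ∧ I.hPref h r < I.hPref h r')) :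
    -- then M ∪ Mₛ is a maximum-size envy-free matching containing M
    let N : R → Option H := fun r => match M r with | some h => some h | none => Ms r
    I.IsMatching N ∧ I.EnvyFree N ∧ (∀ r h, M r = some h → N r = some h) ∧
    ∀ M', I.IsMatching M' → I.EnvyFree M' → (∀ r h, M r = some h → M' r = some h) →
      HRLQ.msize M' ≤ HRLQ.msize N := by
  intro N
  obtain rfl : E' = I.ReducedEdge M := by ext r h; exact hE' r h
  have hN : N = fun r => (M r).or (Ms r) := funext fun r => by dsimp only [N]; cases M r <;> rfl
  rw [hN]
  refine ⟨HRLQ.isMatching_or hM.1.1 (fun r h hr => (hMs₁ r h hr).2.2.1) hMs₂,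
    HRLQ.envyFree_or hM.2.2 hMs₁ hMs₃, fun r h hr => by simp [hr], fun M' hM' hM'ef hle => ?_⟩
  refine Set.ncard_le_ncard fun r (hr : M' r ≠ none) => ?_
  cases hMr : M r with
  | some h => simp [hMr]
  | none =>
    simpa [hMr] using HRLQ.ms_ne_none_of_extension hstrict hMs₁ hMs₃ ⟨hM', hM'ef, hle⟩ hMr hr
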